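/- arXiv:2410.12666 — 2 statements merged into one kernel-verified Lean document; each statement's English description precedes it below -/
import Mathlib

section
/- Let 1 < p < ∞ and let {F₁ < F₂ < ⋯ < F_m} be a chain of maximal Schreier sets. Then the vector x = Σ_{j=1}^m |Fⱼ|^{-1} Σ_{k ∈ Fⱼ} e_k satisfies m^{1/p} ≤ ‖x‖_{B_p} ≤ 2 m^{1/p}, where the Baernstein norm is ‖x‖_{B_p} = sup over Schreier chains C of (Σ_{F∈C} (Σ_{n∈F} |x(n)|)^p)^{1/p}. -/
open Finset Filter

/-- A Schreier set: a finite set of naturals whose cardinality is at most its minimum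
(elements are automatically positive when nonempty). -/
def IsSchreier (F : Finset ℕ) : Prop := ∀ h : F.Nonempty, F.card ≤ F.min' h

/-- A maximal Schreier set: nonempty with cardinality equal to its minimum. -/
def IsMaxSchreier (F : Finset ℕ) : Prop := ∃ h : F.Nonempty, F.card = F.min' h

/-- A (possibly empty) list of nonempty successive Schreier sets. -/
def SchreierChainList (C : List (Finset ℕ)) : Prop :=
  (∀ F ∈ C, IsSchreier F ∧ F.Nonempty) ∧
  C.Chain' (fun F G => ∀ a ∈ F, ∀ b ∈ G, a < b)

/-- A Schreier chain: a nonempty finite list of nonempty successive Schreier sets. -/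
def IsSchreierChain (C : List (Finset ℕ)) : Prop := C ≠ [] ∧ SchreierChainList C

def chainUnion (C : List (Finset ℕ)) : Finset ℕ := C.foldr (· ∪ ·) ∅

noncomputable def mu (p : ℝ) (x : ℕ → ℝ) (F : Finset ℕ) : ℝ :=
  (∑ n ∈ F, |x n| ^ p) ^ (1 / p)

/-- The p-th Schreier norm of a (finitely supported) sequence. -/
noncomputable def schreierNorm (p : ℝ) (x : ℕ → ℝ) : ℝ :=
  sSup {r | ∃ F : Finset ℕ, IsSchreier F ∧ F.Nonempty ∧ r = mu p x F}

noncomputable def betaNorm (p : ℝ) (x : ℕ → ℝ) (C : List (Finset ℕ)) : ℝ :=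
  ((C.map fun F => (∑ n ∈ F, |x n|) ^ p).sum) ^ (1 / p)

/-- The p-th Baernstein norm of a (finitely supported) sequence. -/
noncomputable def baernsteinNorm (p : ℝ) (x : ℕ → ℝ) : ℝ :=
  sSup {r | ∃ C : List (Finset ℕ), IsSchreierChain C ∧ r = betaNorm p x C}

/-- The Schreier covering number of a finite set. -/
noncomputable def tau1 (A : Finset ℕ) : ℕ :=
  sInf {m | ∃ C : List (Finset ℕ), SchreierChainList C ∧ C.length = m ∧ A ⊆ chainUnion C}

/-- Increasing enumeration of a set of naturals (0-indexed). -/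
noncomputable def enumSet (M : Set ℕ) : ℕ → ℕ := Nat.nth (· ∈ M)

/-- `M(J)`: the image of an index set `J` under the increasing enumeration of `M`. -/
noncomputable def subImage (M : Set ℕ) (J : Finset ℕ) : Finset ℕ := J.image (enumSet M)

/-- The Gasparis–Leung index `ΓL₁(M, N) ∈ ℕ ∪ {∞}`. -/
noncomputable def GLindex (M N : Set ℕ) : ℕ∞ :=
  ⨆ J ∈ {J : Finset ℕ | IsSchreier (subImage N J)}, (tau1 (subImage M J) : ℕ∞)

/-- Flat vector with coefficients |F_j|^{-1} on the chain of maximal Schreier sets. -/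
noncomputable def flatVecB (m : ℕ) (F : Fin m → Finset ℕ) : ℕ → ℝ :=
  fun n => ∑ j : Fin m, if n ∈ F j then (((F j).card : ℝ))⁻¹ else 0

/-!
Let `x` be the flat vector and `G₁ < ⋯ < G_k` a Schreier chain, with `tᵢ = ∑_{n ∈ Gᵢ} x n`.
Every `F_j` met by `Gᵢ` after the first one satisfies `|F_j| = min F_j > min Gᵢ ≥ |Gᵢ|`, so those
sets contribute at most `|Gᵢ| / (|Gᵢ| + 1)` and `tᵢ ≤ 2`. The `Gᵢ` are disjoint and `x` has total
mass `m`, so `∑ tᵢ ≤ m` and `∑ tᵢ ^ p ≤ 2 ^ (p - 1) ∑ tᵢ ≤ 2 ^ (p - 1) m`.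
The chain `(F_j)` itself has `β_p = m ^ (1 / p)`.
-/

open Function

lemma Finset.disjoint_of_forall_lt {α : Type*} [Preorder α] {s t : Finset α}
    (h : ∀ a ∈ s, ∀ b ∈ t, a < b) : Disjoint s t :=
  disjoint_left.2 fun a ha ha' => lt_irrefl a (h a ha a ha')

lemma pairwise_disjoint_of_forall_lt {ι α : Type*} [LinearOrder ι] [Preorder α]
    {F : ι → Finset α} (hF : ∀ i j, i < j → ∀ a ∈ F i, ∀ b ∈ F j, a < b) :
    Pairwise (Disjoint on F) := by
  intro i j hij
  rcases hij.lt_or_gt with h | h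
  · exact disjoint_of_forall_lt (hF i j h)
  · exact (disjoint_of_forall_lt (hF j i h)).symm

lemma List.IsChain.pairwise_forall_lt {α : Type*} [Preorder α] {C : List (Finset α)}
    (hne : ∀ G ∈ C, G.Nonempty) (hC : C.IsChain fun G H => ∀ a ∈ G, ∀ b ∈ H, a < b) :
    C.Pairwise fun G H => ∀ a ∈ G, ∀ b ∈ H, a < b := by
  induction C with
  | nil => exact .nil
  | cons G C ih =>
    have ihC := ih (fun H hH => hne H (mem_cons_of_mem G hH)) hC.tail
    refine pairwise_cons.2 ⟨?_, ihC⟩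
    cases C with
    | nil => simp
    | cons H C =>
      obtain ⟨h, hh⟩ := hne H (by simp)
      rintro K (_ | ⟨_, hK⟩)
      · exact hC.rel
      · exact fun a ha b hb =>
          (hC.rel a ha h hh).trans ((pairwise_cons.1 ihC).1 K hK h hh b hb)

lemma Finset.sum_card_inter_le_card {ι α : Type*} [DecidableEq α] {F : ι → Finset α}
    (hF : Pairwise (Disjoint on F)) (G : Finset α) (s : Finset ι) :
    ∑ j ∈ s, #(G ∩ F j) ≤ #G := by
  classical
  rw [← card_biUnion fun i _ j _ hij => (hF hij).mono inter_subset_right inter_subset_right]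
  exact card_le_card (biUnion_subset.2 fun j _ => inter_subset_left)

lemma Real.rpow_le_rpow_sub_one_mul {t c p : ℝ} (ht : 0 ≤ t) (htc : t ≤ c) (hp : 1 ≤ p) :
    t ^ p ≤ c ^ (p - 1) * t := by
  rcases ht.eq_or_lt with rfl | ht
  · simp [Real.zero_rpow (by linarith : p ≠ 0)]
  calc t ^ p = t ^ (p - 1) * t := by rw [Real.rpow_sub_one ht.ne', div_mul_cancel₀ _ ht.ne']
    _ ≤ c ^ (p - 1) * t := by gcongr

lemma IsMaxSchreier.isSchreier {G : Finset ℕ} (hG : IsMaxSchreier G) : IsSchreier G :=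
  fun _ => hG.2.le

lemma SchreierChainList.pairwise_forall_lt {C : List (Finset ℕ)} (hC : SchreierChainList C) :
    C.Pairwise fun G H => ∀ a ∈ G, ∀ b ∈ H, a < b :=
  hC.2.pairwise_forall_lt fun G hG => (hC.1 G hG).2

lemma SchreierChainList.nodup {C : List (Finset ℕ)} (hC : SchreierChainList C) : C.Nodup :=
  hC.pairwise_forall_lt.imp_of_mem fun {G _} hG _ h heq => by
    obtain ⟨a, ha⟩ := (hC.1 G hG).2
    exact lt_irrefl a (h a ha a (heq ▸ ha))

lemma SchreierChainList.pairwiseDisjoint [DecidableEq (Finset ℕ)] {C : List (Finset ℕ)}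
    (hC : SchreierChainList C) : (C.toFinset : Set (Finset ℕ)).PairwiseDisjoint id := by
  rw [List.coe_toFinset]
  exact (hC.pairwise_forall_lt.imp disjoint_of_forall_lt).set_pairwise

section FlatVector

variable {m : ℕ} {F : Fin m → Finset ℕ}

lemma flatVecB_nonneg (n : ℕ) : 0 ≤ flatVecB m F n :=
  sum_nonneg fun j _ => by positivity

lemma sum_flatVecB (S : Finset ℕ) :
    ∑ n ∈ S, flatVecB m F n = ∑ j, (#(S ∩ F j) : ℝ) / #(F j) := by
  simp only [flatVecB]
  rw [sum_comm]
  refine sum_congr rfl fun j _ => ?_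
  rw [sum_ite_mem, sum_const, nsmul_eq_mul, div_eq_mul_inv]

lemma sum_flatVecB_le (S : Finset ℕ) : ∑ n ∈ S, flatVecB m F n ≤ m := by
  rw [sum_flatVecB]
  calc _ ≤ ∑ _j : Fin m, (1 : ℝ) := sum_le_sum fun j _ =>
        div_le_one_of_le₀ (by exact_mod_cast card_le_card inter_subset_right) (by positivity)
    _ = m := by simp

lemma sum_flatVecB_self (hF : Pairwise (Disjoint on F)) {j : Fin m} (hne : (F j).Nonempty) :
    ∑ n ∈ F j, flatVecB m F n = 1 := by
  rw [sum_flatVecB, sum_eq_single j]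
  · rw [inter_self, div_self]
    exact_mod_cast hne.card_pos.ne'
  · intro i _ hij
    simp [disjoint_iff_inter_eq_empty.1 (hF hij.symm)]
  · simp

variable (hmax : ∀ j, IsMaxSchreier (F j))
  (hsucc : ∀ i j : Fin m, i < j → ∀ a ∈ F i, ∀ b ∈ F j, a < b)
include hmax hsucc

lemma card_lt_card_of_inter_nonempty {G : Finset ℕ} (hG : IsSchreier G) {i j : Fin m}
    (hij : i < j) (hi : (G ∩ F i).Nonempty) : #G < #(F j) := by
  obtain ⟨n, hn⟩ := hi
  obtain ⟨hnG, hnF⟩ := mem_inter.1 hn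
  obtain ⟨hne, hcard⟩ := hmax j
  calc #G ≤ G.min' ⟨n, hnG⟩ := hG _
    _ ≤ n := min'_le G n hnG
    _ < (F j).min' hne := hsucc i j hij n hnF _ (min'_mem _ _)
    _ = #(F j) := hcard.symm

lemma sum_flatVecB_le_two {G : Finset ℕ} (hG : IsSchreier G) :
    ∑ n ∈ G, flatVecB m F n ≤ 2 := by
  rw [sum_flatVecB]
  by_cases hmeet : ∃ j, (G ∩ F j).Nonempty
  swap
  · simp only [not_exists, not_nonempty_iff_eq_empty] at hmeet
    simp [hmeet]
  obtain ⟨j₀, hj₀, hmin⟩ := WellFounded.has_min wellFounded_lt {j | (G ∩ F j).Nonempty} hmeet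
  have hlater : ∀ j ∈ univ.erase j₀,
      (#(G ∩ F j) : ℝ) / #(F j) ≤ #(G ∩ F j) / (#G + 1) := by
    intro j hj
    rcases (G ∩ F j).eq_empty_or_nonempty with h | h
    · simp [h]
    have hlt : j₀ < j := lt_of_le_of_ne (not_lt.1 (hmin j h)) (ne_of_mem_erase hj).symm
    gcongr
    exact_mod_cast card_lt_card_of_inter_nonempty hmax hsucc hG hlt hj₀
  rw [← add_sum_erase _ _ (mem_univ j₀), ← one_add_one_eq_two]
  gcongr
  · exact div_le_one_of_le₀ (by exact_mod_cast card_le_card inter_subset_right) (by positivity)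
  calc _ ≤ ∑ j ∈ univ.erase j₀, (#(G ∩ F j) : ℝ) / (#G + 1) := sum_le_sum hlater
    _ = (∑ j ∈ univ.erase j₀, (#(G ∩ F j) : ℝ)) / (#G + 1) := (sum_div ..).symm
    _ ≤ #G / (#G + 1) := by
        gcongr
        exact_mod_cast sum_card_inter_le_card (pairwise_disjoint_of_forall_lt hsucc) G _
    _ ≤ 1 := div_le_one_of_le₀ (by linarith) (by positivity)

lemma sum_rpow_sum_flatVecB_le {p : ℝ} (hp : 1 ≤ p) {ι : Type*} {s : Finset ι}
    {G : ι → Finset ℕ} (hG : ∀ i ∈ s, IsSchreier (G i)) (hdisj : (s : Set ι).PairwiseDisjoint G) :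
    ∑ i ∈ s, (∑ n ∈ G i, flatVecB m F n) ^ p ≤ 2 ^ (p - 1) * m := by
  classical
  calc _ ≤ ∑ i ∈ s, 2 ^ (p - 1) * ∑ n ∈ G i, flatVecB m F n :=
        sum_le_sum fun i hi =>
          Real.rpow_le_rpow_sub_one_mul (sum_nonneg fun n _ => flatVecB_nonneg n)
            (sum_flatVecB_le_two hmax hsucc (hG i hi)) hp
    _ = 2 ^ (p - 1) * ∑ n ∈ s.biUnion G, flatVecB m F n := by rw [← mul_sum, sum_biUnion hdisj]
    _ ≤ 2 ^ (p - 1) * m := by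
        gcongr
        exact sum_flatVecB_le _

lemma sum_map_rpow_sum_flatVecB_le {p : ℝ} (hp : 1 ≤ p) {C : List (Finset ℕ)}
    (hC : SchreierChainList C) :
    (C.map fun G => (∑ n ∈ G, flatVecB m F n) ^ p).sum ≤ 2 ^ (p - 1) * m := by
  classical
  rw [← List.sum_toFinset _ hC.nodup]
  exact sum_rpow_sum_flatVecB_le hmax hsucc hp
    (fun G hG => (hC.1 G (List.mem_toFinset.1 hG)).1) hC.pairwiseDisjoint

lemma betaNorm_flatVecB_le {p : ℝ} (hp : 1 < p) {C : List (Finset ℕ)} (hC : SchreierChainList C) :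
    betaNorm p (flatVecB m F) C ≤ 2 * (m : ℝ) ^ (1 / p) := by
  simp_rw [betaNorm, abs_of_nonneg (flatVecB_nonneg _)]
  calc _ ≤ ((2 : ℝ) ^ (p - 1) * m) ^ (1 / p) := by
        gcongr
        · exact List.sum_nonneg fun _ h => by
            obtain ⟨G, _, rfl⟩ := List.mem_map.1 h
            exact Real.rpow_nonneg (sum_nonneg fun n _ => flatVecB_nonneg n) p
        · exact sum_map_rpow_sum_flatVecB_le hmax hsucc hp.le hC
    _ ≤ ((2 : ℝ) ^ p * m) ^ (1 / p) := by gcongr <;> linarith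
    _ = 2 * (m : ℝ) ^ (1 / p) := by
        rw [Real.mul_rpow (by positivity) (by positivity), ← Real.rpow_mul zero_le_two,
          mul_one_div_cancel (by linarith), Real.rpow_one]

lemma isSchreierChain_ofFn (hm : 1 ≤ m) : IsSchreierChain (List.ofFn F) := by
  refine ⟨by simp only [ne_eq, List.ofFn_eq_nil_iff]; omega, ?_, ?_⟩
  · simp only [List.mem_ofFn]
    rintro _ ⟨j, rfl⟩
    exact ⟨(hmax j).isSchreier, (hmax j).1⟩
  · exact List.isChain_ofFn.2 fun i hi => hsucc _ _ (by simp [Fin.lt_def])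

lemma betaNorm_flatVecB_ofFn (p : ℝ) :
    betaNorm p (flatVecB m F) (List.ofFn F) = (m : ℝ) ^ (1 / p) := by
  simp_rw [betaNorm, List.map_ofFn, List.sum_ofFn, comp_apply,
    abs_of_nonneg (flatVecB_nonneg _),
    sum_flatVecB_self (pairwise_disjoint_of_forall_lt hsucc) (hmax _).1,
    Real.one_rpow, sum_const, card_univ, Fintype.card_fin, nsmul_one]

end FlatVector

/-- Norm estimate for flat vectors in the Baernstein space B_p. -/
theorem flat_vector_estimate_baernstein (p : ℝ) (hp : 1 < p) (m : ℕ) (hm : 1 ≤ m)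
    (F : Fin m → Finset ℕ) (hmax : ∀ j, IsMaxSchreier (F j))
    (hsucc : ∀ i j : Fin m, i < j → ∀ a ∈ F i, ∀ b ∈ F j, a < b) :
    (m : ℝ) ^ (1 / p) ≤ baernsteinNorm p (flatVecB m F) ∧
      baernsteinNorm p (flatVecB m F) ≤ 2 * (m : ℝ) ^ (1 / p) := by
  have hupper : ∀ r ∈ {r | ∃ C, IsSchreierChain C ∧ r = betaNorm p (flatVecB m F) C},
      r ≤ 2 * (m : ℝ) ^ (1 / p) := by
    rintro _ ⟨C, hC, rfl⟩
    exact betaNorm_flatVecB_le hmax hsucc hp hC.2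
  refine ⟨le_csSup ⟨_, hupper⟩ ⟨_, isSchreierChain_ofFn hmax hsucc hm, ?_⟩,
    Real.sSup_le hupper (by positivity)⟩
  exact (betaNorm_flatVecB_ofFn hmax hsucc p).symm
end

section
/- Let x = Σ_{j=1}^k αⱼ e_{mⱼ} where α₁,…,α_k ≥ 0 and {m₁,…,m_k} is a Schreier set (indices not necessarily distinct). Then for 1 < p < ∞, the Baernstein norm satisfies ‖x‖_{B_p} = Σ_{j=1}^k αⱼ. -/
open Finset Filter

lemma List.sum_map_rpow_le_rpow_sum {p : ℝ} (hp : 1 ≤ p) :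
    ∀ l : List ℝ, (∀ t ∈ l, 0 ≤ t) → (l.map (· ^ p)).sum ≤ l.sum ^ p
  | [], _ => by simp [Real.zero_rpow (by linarith : p ≠ 0)]
  | a :: l, hl => by
    have ha : 0 ≤ a := hl a mem_cons_self
    have hl' : ∀ t ∈ l, 0 ≤ t := fun t ht => hl t (mem_cons_of_mem _ ht)
    calc ((a :: l).map (· ^ p)).sum = a ^ p + (l.map (· ^ p)).sum := rfl
      _ ≤ a ^ p + l.sum ^ p := by gcongr; exact sum_map_rpow_le_rpow_sum hp l hl'
      _ ≤ (a + l.sum) ^ p := Real.add_rpow_le_rpow_add ha (sum_nonneg hl') hp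

lemma mem_chainUnion {n : ℕ} {C : List (Finset ℕ)} :
    n ∈ chainUnion C ↔ ∃ F ∈ C, n ∈ F := by
  induction C with
  | nil => simp [chainUnion]
  | cons F l ih =>
    rw [show chainUnion (F :: l) = F ∪ chainUnion l from rfl, mem_union, ih]
    simp

lemma sum_chainUnion {M : Type*} [AddCommMonoid M] (f : ℕ → M) {C : List (Finset ℕ)}
    (hC : C.Pairwise Disjoint) :
    ∑ n ∈ chainUnion C, f n = (C.map fun F => ∑ n ∈ F, f n).sum := by
  induction C with
  | nil => simp [chainUnion]
  | cons F l ih =>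
    obtain ⟨hF, hl⟩ := List.pairwise_cons.1 hC
    have hdisj : Disjoint F (chainUnion l) := by
      rw [Finset.disjoint_right]
      intro n hn hnF
      obtain ⟨G, hG, hnG⟩ := mem_chainUnion.1 hn
      exact Finset.disjoint_left.1 (hF G hG) hnF hnG
    change ∑ n ∈ F ∪ chainUnion l, f n = _
    rw [sum_union hdisj, ih hl, List.map_cons, List.sum_cons]

lemma SchreierChainList.tail {F : Finset ℕ} {l : List (Finset ℕ)}
    (hC : SchreierChainList (F :: l)) : SchreierChainList l :=
  ⟨fun G hG => hC.1 G (List.mem_cons_of_mem _ hG), hC.2.tail⟩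

/-- Successiveness is transitive through nonempty sets, so consecutive comparisons propagate. -/
lemma SchreierChainList.pairwise_lt {C : List (Finset ℕ)} (hC : SchreierChainList C) :
    C.Pairwise fun F G => ∀ a ∈ F, ∀ b ∈ G, a < b := by
  induction C with
  | nil => exact .nil
  | cons F l ih =>
    have hl := ih hC.tail
    refine List.pairwise_cons.2 ⟨?_, hl⟩
    cases l with
    | nil => simp
    | cons G l' =>
      have hFG := (List.isChain_cons_cons.1 hC.2).1
      obtain ⟨c, hc⟩ := (hC.1 G (by simp)).2
      intro H hH a ha b hb
      rcases List.mem_cons.1 hH with rfl | hH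
      · exact hFG a ha b hb
      · exact (hFG a ha c hc).trans ((List.pairwise_cons.1 hl).1 H hH c hc b hb)

lemma SchreierChainList.pairwise_disjoint {C : List (Finset ℕ)} (hC : SchreierChainList C) :
    C.Pairwise Disjoint :=
  hC.pairwise_lt.imp fun hFG =>
    Finset.disjoint_left.2 fun _ haF haG => lt_irrefl _ (hFG _ haF _ haG)

lemma betaNorm_le_sum_sum_abs {p : ℝ} (hp : 1 ≤ p) (x : ℕ → ℝ) (C : List (Finset ℕ)) :
    betaNorm p x C ≤ (C.map fun F => ∑ n ∈ F, |x n|).sum := by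
  set L := C.map fun F => ∑ n ∈ F, |x n|
  have hL : ∀ t ∈ L, 0 ≤ t :=
    List.forall_mem_map.2 fun F _ => sum_nonneg fun n _ => abs_nonneg (x n)
  have hpow : (C.map fun F => (∑ n ∈ F, |x n|) ^ p) = L.map (· ^ p) := by simp [L]
  calc betaNorm p x C = ((L.map (· ^ p)).sum) ^ (1 / p) := by rw [betaNorm, hpow]
    _ ≤ (L.sum ^ p) ^ (1 / p) := by
        gcongr
        · exact List.sum_nonneg (List.forall_mem_map.2 fun t ht => Real.rpow_nonneg (hL t ht) p)
        · exact List.sum_map_rpow_le_rpow_sum hp L hL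
    _ = L.sum := by rw [one_div, Real.rpow_rpow_inv (List.sum_nonneg hL) (by linarith)]

lemma betaNorm_le_sum_chainUnion {p : ℝ} (hp : 1 ≤ p) (x : ℕ → ℝ) {C : List (Finset ℕ)}
    (hC : SchreierChainList C) : betaNorm p x C ≤ ∑ n ∈ chainUnion C, |x n| := by
  rw [sum_chainUnion _ hC.pairwise_disjoint]
  exact betaNorm_le_sum_sum_abs hp x C

lemma betaNorm_singleton {p : ℝ} (hp : p ≠ 0) (x : ℕ → ℝ) (F : Finset ℕ) :
    betaNorm p x [F] = ∑ n ∈ F, |x n| := by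
  simp [betaNorm, ← Real.rpow_mul (sum_nonneg fun n _ => abs_nonneg (x n)), hp]

lemma sum_abs_le_of_support_subset {x : ℕ → ℝ} {S : Finset ℕ} (hx : ∀ n ∉ S, x n = 0)
    (U : Finset ℕ) : ∑ n ∈ U, |x n| ≤ ∑ n ∈ S, |x n| :=
  calc ∑ n ∈ U, |x n| = ∑ n ∈ U ∩ S, |x n| :=
        (sum_subset inter_subset_left fun n hn hnS => by
          rw [hx n fun h => hnS (mem_inter.2 ⟨hn, h⟩), abs_zero]).symm
    _ ≤ ∑ n ∈ S, |x n| :=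
        sum_le_sum_of_subset_of_nonneg inter_subset_right fun _ _ _ => abs_nonneg _

/-- Chains are disjoint, so for `p ≥ 1` superadditivity of `t ↦ t ^ p` bounds every `betaNorm`
by the `ℓ₁`-norm, which the one-set chain `[S]` attains. -/
theorem baernsteinNorm_eq_sum_abs_of_support_subset {p : ℝ} (hp : 1 ≤ p) {x : ℕ → ℝ}
    {S : Finset ℕ} (hS : IsSchreier S) (hx : ∀ n ∉ S, x n = 0) :
    baernsteinNorm p x = ∑ n ∈ S, |x n| := by
  have hupper :
      ∀ r ∈ {r | ∃ C, IsSchreierChain C ∧ r = betaNorm p x C}, r ≤ ∑ n ∈ S, |x n| := by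
    rintro r ⟨C, ⟨-, hC⟩, rfl⟩
    exact (betaNorm_le_sum_chainUnion hp x hC).trans (sum_abs_le_of_support_subset hx _)
  obtain ⟨F, hF, hFne, hFsum⟩ :
      ∃ F, IsSchreier F ∧ F.Nonempty ∧ ∑ n ∈ F, |x n| = ∑ n ∈ S, |x n| := by
    rcases S.eq_empty_or_nonempty with rfl | hSne
    · refine ⟨{1}, fun _ => by simp, singleton_nonempty 1, ?_⟩
      simp [hx 1 (notMem_empty 1)]
    · exact ⟨S, hS, hSne, rfl⟩
  have hmem : ∑ n ∈ S, |x n| ∈ {r | ∃ C, IsSchreierChain C ∧ r = betaNorm p x C} :=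
    ⟨[F], ⟨List.cons_ne_nil _ _, by simpa using ⟨hF, hFne⟩, List.isChain_singleton _⟩,
      by rw [betaNorm_singleton (by linarith), hFsum]⟩
  exact le_antisymm (Real.sSup_le hupper (sum_nonneg fun n _ => abs_nonneg _))
    (le_csSup ⟨_, hupper⟩ hmem)

theorem baernstein_norm_on_schreier_set_general (p : ℝ) (hp : 1 < p) (k : ℕ)
    (α : Fin k → ℝ) (hα : ∀ j, 0 ≤ α j) (m : Fin k → ℕ)
    (hS : IsSchreier (Finset.univ.image m)) :
    baernsteinNorm p (fun n => ∑ j : Fin k, if m j = n then α j else 0) = ∑ j : Fin k, α j := by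
  have hnonneg : ∀ n, 0 ≤ ∑ j : Fin k, if m j = n then α j else 0 :=
    fun n => sum_nonneg fun j _ => by split <;> simp [hα j]
  have hsupp : ∀ n ∉ univ.image m, (∑ j : Fin k, if m j = n then α j else 0) = 0 :=
    fun n hn => sum_eq_zero fun j _ => if_neg fun h => hn (mem_image.2 ⟨j, mem_univ j, h⟩)
  rw [baernsteinNorm_eq_sum_abs_of_support_subset hp.le hS hsupp]
  simp_rw [abs_of_nonneg (hnonneg _)]
  rw [sum_comm]
  exact sum_congr rfl fun j _ => by simp

/-- Baernstein norm of a vector supported on a Schreier set (with possibly repeated indices). -/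
theorem baernstein_norm_on_schreier_set (p : ℝ) (hp : 1 < p) (k : ℕ) (hk : 1 ≤ k)
    (α : Fin k → ℝ) (hα : ∀ j, 0 ≤ α j) (m : Fin k → ℕ)
    (hS : IsSchreier (Finset.univ.image m)) :
    baernsteinNorm p (fun n => ∑ j : Fin k, if m j = n then α j else 0) = ∑ j : Fin k, α j :=
  baernstein_norm_on_schreier_set_general p hp k α hα m hS
end
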